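/- Let ⟨s,t,f⟩ be a linear identity of length 2n, n ≥ 2, that is ultimately AC-nice. Then {s, t} = {Lₙ, Rₙ}, where Lₙ is the left comb bracketing (((∘∘)∘)…)∘ (defined by L₂ = ∘∘ and Lₙ = Lₙ₋₁·∘) and Rₙ is the right comb bracketing ∘(∘(…(∘∘))) (defined by R₂ = ∘∘ and Rₙ = ∘·Rₙ₋₁). -/
import Mathlib


/-- Bracketings: full binary trees in which every internal node has two children. -/
inductive Brack : Type
  | leaf : Brack
  | node : Brack → Brack → Brack

/-- Number of leaves of a bracketing. -/
def Brack.leaves : Brack → ℕ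
  | .leaf => 1
  | .node l r => l.leaves + r.leaves

/-- The `s`-product in a magma `G`: evaluate the bracketing `s`, labelling its leaves
from left to right by `a k, a (k+1), …`. -/
def Brack.eval {G : Type*} [Mul G] : Brack → (ℕ → G) → ℕ → G
  | .leaf, a, k => a k
  | .node l r, a, k => l.eval a k * r.eval a (k + l.leaves)

/-- Extend a permutation of `{0, …, n−1}` to `ℕ` (identity elsewhere). -/
def permNat {n : ℕ} (f : Equiv.Perm (Fin n)) (i : ℕ) : ℕ :=
  if h : i < n then (f ⟨i, h⟩ : ℕ) else i

/-- A magma `G` satisfies the linear identity `⟨s, t, f⟩` if for all `a₁, …, aₙ ∈ G`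
the `s`-product of `(a₁, …, aₙ)` equals the `t`-product of `(a_{f(1)}, …, a_{f(n)})`. -/
def Satisfies (G : Type*) [Mul G] {n : ℕ} (s t : Brack) (f : Equiv.Perm (Fin n)) : Prop :=
  ∀ a : ℕ → G, s.eval a 0 = t.eval (fun i => a (permNat f i)) 0

/-- A magma `G` is `m`AC-nice if any two products of the same `m` elements coincide:
for every `a`, all bracketings `s, t` with `m` leaves and all permutations `f, g`,
the `s`-product of `(a_{f(1)}, …, a_{f(m)})` equals the `t`-product of
`(a_{g(1)}, …, a_{g(m)})`. -/
def ACnice (G : Type*) [Mul G] (m : ℕ) : Prop :=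
  ∀ (a : ℕ → G) (s t : Brack), s.leaves = m → t.leaves = m →
    ∀ f g : Equiv.Perm (Fin m),
      s.eval (fun i => a (permNat f i)) 0 = t.eval (fun i => a (permNat g i)) 0

/-- The left comb bracketing `(((∘∘)∘)…)∘` with `n` leaves. -/
def leftComb : ℕ → Brack
  | 0 => .leaf
  | 1 => .leaf
  | n + 2 => .node (leftComb (n + 1)) .leaf

/-- The right comb bracketing `∘(∘(…(∘∘)))` with `n` leaves. -/
def rightComb : ℕ → Brack
  | 0 => .leaf
  | 1 => .leaf
  | n + 2 => .node .leaf (rightComb (n + 1))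

-- ===== auxiliary development =====
lemma Brack.leaves_pos : ∀ u : Brack, 1 ≤ u.leaves := by
  intro u
  induction u with
  | leaf => exact le_refl 1
  | node l r ihl ihr => show 1 ≤ l.leaves + r.leaves; omega

lemma leaves_eq_one {u : Brack} (h : u.leaves = 1) : u = .leaf := by
  cases u with
  | leaf => rfl
  | node l r =>
      have h1 := l.leaves_pos; have h2 := r.leaves_pos
      have : l.leaves + r.leaves = 1 := h
      omega

lemma leaves_eq_two {u : Brack} (h : u.leaves = 2) : u = .node .leaf .leaf := by
  cases u with
  | leaf => exact absurd h (by simp [Brack.leaves])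
  | node l r =>
      have h1 := l.leaves_pos; have h2 := r.leaves_pos
      have h' : l.leaves + r.leaves = 2 := h
      have hl : l.leaves = 1 := by omega
      have hr : r.leaves = 1 := by omega
      rw [leaves_eq_one hl, leaves_eq_one hr]

lemma rightComb_leaves : ∀ m : ℕ, 1 ≤ m → (rightComb m).leaves = m
  | 1, _ => rfl
  | m + 2, _ => by
      show 1 + (rightComb (m + 1)).leaves = m + 2
      rw [rightComb_leaves (m + 1) (by omega)]
      omega

lemma leftComb_leaves : ∀ m : ℕ, 1 ≤ m → (leftComb m).leaves = m
  | 1, _ => rfl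
  | m + 2, _ => by
      show (leftComb (m + 1)).leaves + 1 = m + 2
      rw [leftComb_leaves (m + 1) (by omega)]

lemma leftComb_ne_rightComb {m : ℕ} (hm : 3 ≤ m) : leftComb m ≠ rightComb m := by
  obtain ⟨k, rfl⟩ : ∃ k, m = k + 3 := ⟨m - 3, by omega⟩
  intro h
  have h' : Brack.node (Brack.node (leftComb (k + 1)) .leaf) .leaf
      = Brack.node .leaf (rightComb (k + 2)) := h
  injection h' with h1 h2
  exact Brack.noConfusion h1

-- The magma MA: collapses every bracketing that is not a right comb.
inductive MA : Type u
  | bot | zf | st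

instance : Mul MA.{u} :=
  ⟨fun x y => match x, y with
    | .zf, .zf => .st
    | .zf, .st => .st
    | _, _ => .bot⟩

lemma MA.mul_left_mul (x y z : MA.{u}) : (x * y) * z = MA.bot := by
  cases x <;> cases y <;> cases z <;> rfl

lemma MA.mul_bot (x : MA.{u}) : x * MA.bot = MA.bot := by
  cases x <;> rfl

lemma collapseA : ∀ u : Brack, u ≠ rightComb u.leaves →
    ∀ (a : ℕ → MA.{u_1}) (k : ℕ), u.eval a k = MA.bot := by
  intro u
  induction u with
  | leaf => intro h; exact absurd rfl h
  | node l r ihl ihr =>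
      intro h a k
      cases l with
      | node l1 l2 =>
          show ((Brack.node l1 l2).eval a k * r.eval a _) = MA.bot
          show (((l1.eval a k) * (l2.eval a _)) * r.eval a _) = MA.bot
          exact MA.mul_left_mul _ _ _
      | leaf =>
          cases r with
          | leaf => exact absurd rfl h
          | node r1 r2 =>
              have hr : Brack.node r1 r2 ≠ rightComb (Brack.node r1 r2).leaves := by
                intro hr
                apply h
                have h1 := r1.leaves_pos; have h2 := r2.leaves_pos
                obtain ⟨j, hj⟩ : ∃ j, (Brack.node r1 r2).leaves = j + 2 :=
                  ⟨r1.leaves + r2.leaves - 2, by show r1.leaves + r2.leaves = _; omega⟩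
                have hL : (Brack.node .leaf (Brack.node r1 r2)).leaves = (j + 1) + 2 := by
                  show 1 + (Brack.node r1 r2).leaves = _
                  omega
                rw [hL]
                show Brack.node .leaf (Brack.node r1 r2) = Brack.node .leaf (rightComb (j + 2))
                rw [← hj, ← hr]
              show a k * (Brack.node r1 r2).eval a (k + 1) = MA.bot
              rw [ihr hr a (k + 1)]
              exact MA.mul_bot _
  
lemma evalA_rightComb : ∀ m k : ℕ, (rightComb m).eval (fun _ => MA.zf.{u}) k ≠ MA.bot
  | 0, k => fun h => MA.noConfusion h
  | 1, k => fun h => MA.noConfusion h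
  | m + 2, k => by
      have ih := evalA_rightComb (m + 1) (k + 1)
      show MA.zf * (rightComb (m + 1)).eval (fun _ => MA.zf) (k + 1) ≠ MA.bot
      cases hx : (rightComb (m + 1)).eval (fun _ => MA.zf.{u}) (k + 1) with
      | bot => exact absurd hx ih
      | zf => exact fun h' => MA.noConfusion h'
      | st => exact fun h' => MA.noConfusion h'

lemma notNiceA {m : ℕ} (hm : 3 ≤ m) : ¬ ACnice MA.{u} m := by
  intro h
  have h1 := h (fun _ => MA.zf) (rightComb m) (leftComb m)
    (rightComb_leaves m (by omega)) (leftComb_leaves m (by omega)) 1 1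
  have h2 := collapseA (leftComb m)
    (by rw [leftComb_leaves m (by omega)]; exact leftComb_ne_rightComb hm)
    (fun _ => MA.zf) 0
  exact evalA_rightComb m 0 (h1.trans h2)

lemma satA {n : ℕ} {s t : Brack} (f : Equiv.Perm (Fin n))
    (hs : s.leaves = n) (ht : t.leaves = n)
    (hs' : s ≠ rightComb n) (ht' : t ≠ rightComb n) : Satisfies MA.{u} s t f := by
  intro a
  rw [collapseA s (by rw [hs]; exact hs') a 0,
    collapseA t (by rw [ht]; exact ht') _ 0]

-- The magma MB: mirror image, collapses every bracketing that is not a left comb.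
inductive MB : Type u
  | bot | zf | st

instance : Mul MB.{u} :=
  ⟨fun x y => match x, y with
    | .zf, .zf => .st
    | .st, .zf => .st
    | _, _ => .bot⟩

lemma MB.mul_right_mul (x y z : MB.{u}) : x * (y * z) = MB.bot := by
  cases x <;> cases y <;> cases z <;> rfl

lemma MB.bot_mul (x : MB.{u}) : MB.bot * x = MB.bot := by
  cases x <;> rfl

lemma collapseB : ∀ u : Brack, u ≠ leftComb u.leaves →
    ∀ (a : ℕ → MB.{u_1}) (k : ℕ), u.eval a k = MB.bot := by
  intro u
  induction u with
  | leaf => intro h; exact absurd rfl h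
  | node l r ihl ihr =>
      intro h a k
      cases r with
      | node r1 r2 =>
          show (l.eval a k * (Brack.node r1 r2).eval a _) = MB.bot
          show (l.eval a k * ((r1.eval a _) * (r2.eval a _))) = MB.bot
          exact MB.mul_right_mul _ _ _
      | leaf =>
          cases l with
          | leaf => exact absurd rfl h
          | node l1 l2 =>
              have hl : Brack.node l1 l2 ≠ leftComb (Brack.node l1 l2).leaves := by
                intro hl
                apply h
                have h1 := l1.leaves_pos; have h2 := l2.leaves_pos
                obtain ⟨j, hj⟩ : ∃ j, (Brack.node l1 l2).leaves = j + 2 :=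
                  ⟨l1.leaves + l2.leaves - 2, by show l1.leaves + l2.leaves = _; omega⟩
                have hL : (Brack.node (Brack.node l1 l2) .leaf).leaves = (j + 1) + 2 := by
                  show (Brack.node l1 l2).leaves + 1 = _
                  omega
                rw [hL]
                show Brack.node (Brack.node l1 l2) .leaf
                    = Brack.node (leftComb (j + 2)) .leaf
                rw [← hj, ← hl]
              show (Brack.node l1 l2).eval a k * a (k + (Brack.node l1 l2).leaves) = MB.bot
              rw [ihl hl a k]
              exact MB.bot_mul _

lemma evalB_leftComb : ∀ m k : ℕ, (leftComb m).eval (fun _ => MB.zf.{u}) k ≠ MB.bot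
  | 0, k => fun h => MB.noConfusion h
  | 1, k => fun h => MB.noConfusion h
  | m + 2, k => by
      have ih := evalB_leftComb (m + 1) k
      show (leftComb (m + 1)).eval (fun _ => MB.zf) k * MB.zf ≠ MB.bot
      cases hx : (leftComb (m + 1)).eval (fun _ => MB.zf.{u}) k with
      | bot => exact absurd hx ih
      | zf => exact fun h' => MB.noConfusion h'
      | st => exact fun h' => MB.noConfusion h'

lemma notNiceB {m : ℕ} (hm : 3 ≤ m) : ¬ ACnice MB.{u} m := by
  intro h
  have h1 := h (fun _ => MB.zf) (leftComb m) (rightComb m)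
    (leftComb_leaves m (by omega)) (rightComb_leaves m (by omega)) 1 1
  have h2 := collapseB (rightComb m)
    (by rw [rightComb_leaves m (by omega)]; exact fun hh => leftComb_ne_rightComb hm hh.symm)
    (fun _ => MB.zf) 0
  exact evalB_leftComb m 0 (h1.trans h2)

lemma satB {n : ℕ} {s t : Brack} (f : Equiv.Perm (Fin n))
    (hs : s.leaves = n) (ht : t.leaves = n)
    (hs' : s ≠ leftComb n) (ht' : t ≠ leftComb n) : Satisfies MB.{u} s t f := by
  intro a
  rw [collapseB s (by rw [hs]; exact hs') a 0,
    collapseB t (by rw [ht]; exact ht') _ 0]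

/-- Proposition 5.5: if the linear identity `⟨s,t,f⟩` of length `2n`, `n ≥ 2`, is
ultimately AC-nice (every magma satisfying it is `m`AC-nice for some `m ≥ 3`), then
`{s, t} = {Lₙ, Rₙ}`, the left and right comb bracketings. -/
theorem stmt10.{w} (n : ℕ) (hn : 2 ≤ n)
    (s t : Brack) (hs : s.leaves = n) (ht : t.leaves = n) (f : Equiv.Perm (Fin n))
    (hnice : ∀ (G : Type w) [Mul G], Satisfies G s t f → ∃ m, 3 ≤ m ∧ ACnice G m) :
    (s = leftComb n ∧ t = rightComb n) ∨ (s = rightComb n ∧ t = leftComb n) := by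
  rcases Nat.lt_or_ge n 3 with h3 | h3
  · -- n = 2
    have hn2 : n = 2 := by omega
    subst hn2
    left
    exact ⟨leaves_eq_two hs, leaves_eq_two ht⟩
  · by_cases hsR : s = rightComb n
    · by_cases htL : t = leftComb n
      · exact Or.inr ⟨hsR, htL⟩
      · exfalso
        have hsL : s ≠ leftComb n := by
          rw [hsR]; exact fun hh => leftComb_ne_rightComb h3 hh.symm
        obtain ⟨m, hm, hh⟩ := hnice MB.{w} (satB f hs ht hsL htL)
        exact notNiceB hm hh
    · by_cases htR : t = rightComb n
      · by_cases hsL : s = leftComb n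
        · exact Or.inl ⟨hsL, htR⟩
        · exfalso
          have htL : t ≠ leftComb n := by
            rw [htR]; exact fun hh => leftComb_ne_rightComb h3 hh.symm
          obtain ⟨m, hm, hh⟩ := hnice MB.{w} (satB f hs ht hsL htL)
          exact notNiceB hm hh
      · exfalso
        obtain ⟨m, hm, hh⟩ := hnice MA.{w} (satA f hs ht hsR htR)
        exact notNiceA hm hh
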